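/- Let K be the reference tetrahedron in ℝ³ and let p ≥ 1 be an integer. Let V = {Φ ∈ (P_p)³ : Φ·n = 0 on ∂K} and Q = {w ∈ P_{p−1} : ∫_K w dx = 0}. For every B ∈ (P_p)³ there exists a unique pair (Φ, v) ∈ V × Q satisfying the mixed system: ∫_K w · div Φ dx + ∫_K w · div B dx = 0 for all w ∈ Q, and ∫_K Φ·Ψ dx + ∫_K v · div Ψ dx = 0 for all Ψ ∈ V. -/

import Mathlib

/-!
The mixed system is a square linear system on the finite-dimensional space `V × Q` for the
symmetric form `a((Φ, v), (Ψ, w)) = ∫ Φ·Ψ + ∫ v div Ψ + ∫ w div Φ`, so it is uniquely solvable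
as soon as `a` is nondegenerate on `V × Q`. Let `(Φ, v)` be `a`-orthogonal to `V × Q`. Testing
with `(0, v)` and then `(Φ, v)` gives `∫ |Φ|² = 0`, so `Φ = 0` and `∫ v div Ψ = 0` for all
`Ψ ∈ V`. The bubble `Ψ = xᵢ λ₀ ∂ᵢv eᵢ` lies in `V`, and since `xᵢ λ₀` vanishes where the lines in
direction `eᵢ` leave `K`, integrating `∂ᵢ(xᵢ λ₀ ∂ᵢv · v)` by parts gives `∫ xᵢ λ₀ (∂ᵢv)² = 0`.
Hence `v` is constant, and a constant of mean zero vanishes.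
-/

open MeasureTheory MvPolynomial Real

noncomputable section

/-- Vertices of the reference tetrahedron: v0=(0,0,0), v1=(1,0,0), v2=(0,1,0), v3=(0,0,1). -/
def vtx : Fin 4 → Fin 3 → ℝ :=
  ![![0,0,0], ![1,0,0], ![0,1,0], ![0,0,1]]

/-- Barycentric coordinates λ₀ = 1-x-y-z, λ₁ = x, λ₂ = y, λ₃ = z. -/
def lam : Fin 4 → (Fin 3 → ℝ) → ℝ :=
  ![fun x => 1 - x 0 - x 1 - x 2, fun x => x 0, fun x => x 1, fun x => x 2]

/-- The reference tetrahedron K = {x : λ_j(x) ≥ 0 for all j}. -/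
def Ktet : Set (Fin 3 → ℝ) := {x | ∀ j : Fin 4, 0 ≤ lam j x}

/-- Face F_j = {x ∈ K : λ_j(x) = 0}. -/
def faceK (j : Fin 4) : Set (Fin 3 → ℝ) := {x ∈ Ktet | lam j x = 0}

/-- Outward unit normals of the four faces of K. -/
def normalK : Fin 4 → Fin 3 → ℝ :=
  ![fun _ => 1 / Real.sqrt 3, ![-1,0,0], ![0,-1,0], ![0,0,-1]]

/-- (Constant) gradients of the barycentric coordinates. -/
def gradLam : Fin 4 → Fin 3 → ℝ :=
  ![![-1,-1,-1], ![1,0,0], ![0,1,0], ![0,0,1]]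

/-- Divergence of a vector polynomial. -/
def divP (Φ : Fin 3 → MvPolynomial (Fin 3) ℝ) : MvPolynomial (Fin 3) ℝ :=
  ∑ i, MvPolynomial.pderiv i (Φ i)

/-- The normal component of the vector polynomial Φ vanishes on every face of K. -/
def normalVanish (Φ : Fin 3 → MvPolynomial (Fin 3) ℝ) : Prop :=
  ∀ j : Fin 4, ∀ q ∈ faceK j, ∑ i, MvPolynomial.eval q (Φ i) * normalK j i = 0

/-- Divergence of a vector field (as a function). -/
def divF (Φ : (Fin 3 → ℝ) → (Fin 3 → ℝ)) (x : Fin 3 → ℝ) : ℝ :=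
  ∑ i, fderiv ℝ Φ x (Pi.single i 1) i

/-- The normal component of the vector field Φ vanishes on every face of K. -/
def normalVanishF (Φ : (Fin 3 → ℝ) → (Fin 3 → ℝ)) : Prop :=
  ∀ j : Fin 4, ∀ q ∈ faceK j, ∑ i, Φ q i * normalK j i = 0

namespace MvPolynomial

section pderiv

variable {σ R : Type*} [CommSemiring R]

theorem totalDegree_pderiv_le (i : σ) (f : MvPolynomial σ R) :
    (pderiv i f).totalDegree ≤ f.totalDegree - 1 := by
  classical
  refine Finset.sup_le fun m hm => ?_
  rw [mem_support_iff, coeff_pderiv] at hm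
  have hdeg := le_totalDegree (mem_support_iff.mpr (left_ne_zero_of_mul hm))
  rw [Finsupp.sum_add_index' (fun _ => rfl) (fun _ _ _ => rfl),
    Finsupp.sum_single_index rfl] at hdeg
  omega

theorem pderiv_eq_zero_of_totalDegree_eq_zero {f : MvPolynomial σ R} (h : f.totalDegree = 0)
    (i : σ) : pderiv i f = 0 := by
  rw [totalDegree_eq_zero_iff_eq_C.mp h, pderiv_C]

theorem eq_C_of_forall_pderiv_eq_zero [NoZeroDivisors R] [CharZero R] {f : MvPolynomial σ R}
    (h : ∀ i, pderiv i f = 0) : f = C (coeff 0 f) := by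
  classical
  ext m
  rcases eq_or_ne m 0 with rfl | hm
  · simp
  obtain ⟨i, hi⟩ : ∃ i, m i ≠ 0 := by simpa [Finsupp.ext_iff] using hm
  have hm' : m - Finsupp.single i 1 + Finsupp.single i 1 = m :=
    tsub_add_cancel_of_le (Finsupp.single_le_iff.mpr (Nat.one_le_iff_ne_zero.mpr hi))
  have := coeff_pderiv (i := i) f (m - Finsupp.single i 1)
  rw [h i, hm', coeff_zero, eq_comm, mul_eq_zero] at this
  rw [coeff_C, if_neg (Ne.symm hm),
    this.resolve_right (Nat.cast_add_one_ne_zero _)]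

end pderiv

theorem hasDerivAt_eval_update {σ 𝕜 : Type*} [DecidableEq σ] [NontriviallyNormedField 𝕜]
    (f : MvPolynomial σ 𝕜) (x : σ → 𝕜) (i : σ) (t : 𝕜) :
    HasDerivAt (fun s => eval (Function.update x i s) f)
      (eval (Function.update x i t) (pderiv i f)) t := by
  induction f using MvPolynomial.induction_on with
  | C a => simpa using hasDerivAt_const t a
  | add p q hp hq =>
    simp only [map_add]
    exact hp.add hq
  | mul_X p j hp =>
    simp only [map_mul, eval_X, pderiv_mul, map_add]
    rcases eq_or_ne j i with rfl | hne
    · simp only [Function.update_self, pderiv_X_self, map_one]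
      exact (hp.mul (hasDerivAt_id' t)).congr_deriv (by ring)
    · simp only [Function.update_of_ne hne, pderiv_X_of_ne hne, map_zero]
      exact (hp.mul_const (x j)).congr_deriv (by ring)

theorem eq_zero_of_nonneg_of_setIntegral_eq_zero {ι : Type*} [Fintype ι]
    {P : MvPolynomial ι ℝ} {s : Set (ι → ℝ)} (hs : MeasurableSet s) {a b : ι → ℝ}
    (hab : ∀ i, a i < b i)
    (hbox : Set.univ.pi (fun i => Set.Ioo (a i) (b i)) ⊆ s)
    (hint : IntegrableOn (fun x => eval x P) s)
    (hnn : ∀ x ∈ s, 0 ≤ eval x P) (h : ∫ x in s, eval x P = 0) : P = 0 := by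
  have hae : (fun x => eval x P) =ᵐ[volume.restrict s] 0 :=
    (setIntegral_eq_zero_iff_of_nonneg_ae (ae_restrict_of_forall_mem hs hnn) hint).mp h
  have hbox_zero : Set.EqOn (fun x => eval x P) 0 (Set.univ.pi fun i => Set.Ioo (a i) (b i)) :=
    volume.eqOn_open_of_ae_eq (ae_restrict_of_ae_restrict_of_subset hbox hae)
      (isOpen_set_pi Set.finite_univ fun _ _ => isOpen_Ioo) (continuous_eval P).continuousOn
      continuousOn_const
  exact funext_set _ (fun i => Set.Ioo_infinite (hab i)) fun x hx => by simpa using hbox_zero hx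

end MvPolynomial

theorem LinearMap.existsUnique_mem_forall_apply_eq {K M : Type*} [Field K] [AddCommGroup M]
    [Module K M] (a : M →ₗ[K] M →ₗ[K] K) (E : Submodule K M) [FiniteDimensional K E]
    (ha : ∀ x ∈ E, (∀ z ∈ E, a x z = 0) → x = 0) (l : M →ₗ[K] K) :
    ∃! x, x ∈ E ∧ ∀ z ∈ E, a x z = l z := by
  set B : LinearMap.BilinForm K E := a.compl₁₂ E.subtype E.subtype
  have hB : B.Nondegenerate := .ofSeparatingLeft fun x hx =>
    Subtype.ext (ha x x.2 fun z hz => hx ⟨z, hz⟩)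
  set x := (B.toDual hB).symm (l ∘ₗ E.subtype)
  refine ⟨x, ⟨x.2, fun z hz => B.apply_toDual_symm_apply (hB := hB) _ ⟨z, hz⟩⟩, ?_⟩
  rintro y ⟨hy, hyl⟩
  refine sub_eq_zero.mp (ha _ (E.sub_mem hy x.2) fun z hz => ?_)
  have hx : a x z = l z := B.apply_toDual_symm_apply (hB := hB) _ ⟨z, hz⟩
  rw [map_sub, LinearMap.sub_apply, hx, hyl z hz, sub_self]

theorem MeasureTheory.setIntegral_eq_integral_setIntegral_insertNth {n : ℕ} (i : Fin (n + 1))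
    {s : Set (Fin (n + 1) → ℝ)} (hs : MeasurableSet s) {f : (Fin (n + 1) → ℝ) → ℝ}
    (hf : IntegrableOn f s) :
    ∫ x in s, f x = ∫ y : Fin n → ℝ, ∫ t in {t | i.insertNth t y ∈ s}, f (i.insertNth t y) := by
  set e := (MeasurableEquiv.piFinSuccAbove (fun _ : Fin (n + 1) => ℝ) i).symm
  have he : MeasurePreserving e (volume.prod volume) volume :=
    (volume_preserving_piFinSuccAbove (fun _ : Fin (n + 1) => ℝ) i).symm _
  have hslice (y : Fin n → ℝ) : MeasurableSet {t | i.insertNth t y ∈ s} :=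
    hs.preimage (e.measurable.comp measurable_prodMk_right)
  rw [← integral_indicator hs, ← he.integral_comp e.measurableEmbedding,
    integral_prod_symm (fun z => s.indicator f (e z))
      ((he.integrable_comp_emb e.measurableEmbedding).mpr ((integrable_indicator_iff hs).mpr hf))]
  congr 1 with y
  rw [← integral_indicator (hslice y)]
  rfl

theorem mem_Ktet_iff {x : Fin 3 → ℝ} : x ∈ Ktet ↔ (∀ j, 0 ≤ x j) ∧ ∑ j, x j ≤ 1 := by
  simp only [Ktet, Set.mem_ofPred_eq, Fin.forall_fin_succ, Fin.sum_univ_three, lam,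
    Matrix.cons_val_zero, Matrix.cons_val_succ, Fin.succ_zero_eq_one, Fin.succ_one_eq_two,
    IsEmpty.forall_iff, and_true]
  constructor
  · rintro ⟨h0, h1, h2, h3⟩
    exact ⟨⟨h1, h2, h3⟩, by linarith⟩
  · rintro ⟨⟨h1, h2, h3⟩, h0⟩
    exact ⟨by linarith, h1, h2, h3⟩

theorem isCompact_Ktet : IsCompact Ktet := by
  have hclosed : IsClosed Ktet := by
    simp only [Ktet, Set.ofPred_forall]
    refine isClosed_iInter fun j => isClosed_le continuous_const ?_
    fin_cases j <;> simp [lam] <;> fun_prop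
  refine Metric.isCompact_of_isClosed_isBounded hclosed
    ((Metric.isBounded_Icc (0 : Fin 3 → ℝ) 1).subset fun x hx => ?_)
  obtain ⟨hnn, hsum⟩ := mem_Ktet_iff.mp hx
  have hle : ∀ j, x j ≤ ∑ k, x k := fun j =>
    Finset.single_le_sum (fun k _ => hnn k) (Finset.mem_univ j)
  exact ⟨hnn, fun j => (hle j).trans hsum⟩

theorem measurableSet_Ktet : MeasurableSet Ktet := isCompact_Ktet.isClosed.measurableSet

theorem integrableOn_eval_Ktet (P : MvPolynomial (Fin 3) ℝ) :
    IntegrableOn (fun x => eval x P) Ktet :=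
  (continuous_eval P).continuousOn.integrableOn_compact isCompact_Ktet

theorem pi_Ioo_subset_Ktet : Set.univ.pi (fun _ : Fin 3 => Set.Ioo (0 : ℝ) (1 / 3)) ⊆ Ktet := by
  intro x hx
  simp only [Set.mem_univ_pi, Set.mem_Ioo] at hx
  refine mem_Ktet_iff.mpr ⟨fun j => (hx j).1.le, ?_⟩
  simp only [Fin.sum_univ_three]
  linarith [(hx 0).2, (hx 1).2, (hx 2).2]

theorem insertNth_mem_Ktet_iff {i : Fin 3} {t : ℝ} {y : Fin 2 → ℝ} :
    i.insertNth t y ∈ Ktet ↔ (∀ j, 0 ≤ y j) ∧ t ∈ Set.Icc 0 (1 - ∑ j, y j) := by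
  rw [mem_Ktet_iff, Fin.sum_univ_succAbove _ i, i.forall_iff_succAbove]
  simp only [Fin.insertNth_apply_same, Fin.insertNth_apply_succAbove, Set.mem_Icc]
  constructor
  · rintro ⟨⟨ht, hy⟩, hsum⟩
    exact ⟨hy, ht, by linarith⟩
  · rintro ⟨hy, ht, hsum⟩
    exact ⟨⟨ht, hy⟩, by linarith⟩

def integralK : MvPolynomial (Fin 3) ℝ →ₗ[ℝ] ℝ where
  toFun P := ∫ x in Ktet, eval x P
  map_add' P Q := by
    simp only [map_add]
    exact integral_add (integrableOn_eval_Ktet P) (integrableOn_eval_Ktet Q)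
  map_smul' c P := by
    simp only [smul_eval, RingHom.id_apply]
    exact integral_const_mul c _

theorem integralK_apply (P : MvPolynomial (Fin 3) ℝ) :
    integralK P = ∫ x in Ktet, eval x P := rfl

theorem integralK_mul (P Q : MvPolynomial (Fin 3) ℝ) :
    integralK (P * Q) = ∫ x in Ktet, eval x P * eval x Q := by
  simp [integralK_apply]

theorem integralK_dotProduct (Φ Ψ : Fin 3 → MvPolynomial (Fin 3) ℝ) :
    integralK (Φ ⬝ᵥ Ψ) = ∫ x in Ktet, ∑ i, eval x (Φ i) * eval x (Ψ i) := by
  rw [integralK_apply]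
  simp only [dotProduct, map_sum, map_mul]

theorem eq_zero_of_nonneg_on_Ktet {P : MvPolynomial (Fin 3) ℝ} (hnn : ∀ x ∈ Ktet, 0 ≤ eval x P)
    (h : integralK P = 0) : P = 0 :=
  eq_zero_of_nonneg_of_setIntegral_eq_zero measurableSet_Ktet (fun _ => by norm_num)
    pi_Ioo_subset_Ktet (integrableOn_eval_Ktet P) hnn h

theorem eq_zero_of_integralK_dotProduct_self_eq_zero {Φ : Fin 3 → MvPolynomial (Fin 3) ℝ}
    (h : integralK (Φ ⬝ᵥ Φ) = 0) : Φ = 0 := by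
  have hsq (x : Fin 3 → ℝ) : eval x (Φ ⬝ᵥ Φ) = ∑ k, eval x (Φ k) * eval x (Φ k) := by
    simp [dotProduct]
  have hzero := eq_zero_of_nonneg_on_Ktet (fun x _ => by
    rw [hsq]; exact Finset.sum_nonneg fun k _ => mul_self_nonneg _) h
  funext k
  refine MvPolynomial.funext fun x => ?_
  have hx := hsq x
  rw [hzero, map_zero, eq_comm, Finset.sum_mul_self_eq_zero_iff] at hx
  simpa using hx k (Finset.mem_univ k)

/-- Integration by parts along the `i`-th coordinate: every line in that direction meets `Ktet`
in a segment whose endpoints lie on the planes `x i = 0` and `∑ j, x j = 1`. -/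
theorem integral_pderiv_eq_zero_of_eval_eq_zero (i : Fin 3) {g : MvPolynomial (Fin 3) ℝ}
    (h₀ : ∀ x, x i = 0 → eval x g = 0) (h₁ : ∀ x, ∑ j, x j = 1 → eval x g = 0) :
    ∫ x in Ktet, eval x (pderiv i g) = 0 := by
  rw [setIntegral_eq_integral_setIntegral_insertNth i measurableSet_Ktet
    (integrableOn_eval_Ktet _)]
  refine integral_eq_zero_of_ae (Filter.Eventually.of_forall fun y => ?_)
  dsimp only [Pi.zero_apply]
  by_cases hy : ∀ j, 0 ≤ y j
  swap
  · have : {t : ℝ | i.insertNth t y ∈ Ktet} = ∅ :=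
      Set.eq_empty_of_forall_notMem fun t ht => hy (insertNth_mem_Ktet_iff.mp ht).1
    rw [this, Measure.restrict_empty, integral_zero_measure]
  set b := 1 - ∑ j, y j
  have : {t : ℝ | i.insertNth t y ∈ Ktet} = Set.Icc 0 b :=
    Set.ext fun t => insertNth_mem_Ktet_iff.trans (and_iff_right hy)
  rw [this]
  rcases lt_or_ge b 0 with hb | hb
  · simp [Set.Icc_eq_empty_of_lt hb]
  have hderiv (t : ℝ) : HasDerivAt (fun s => eval (i.insertNth s y) g)
      (eval (i.insertNth t y) (pderiv i g)) t := by
    simpa only [Fin.update_insertNth] using hasDerivAt_eval_update g (i.insertNth 0 y) i t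
  have hcont : Continuous fun t => eval (i.insertNth t y) (pderiv i g) :=
    (continuous_eval _).comp (by fun_prop)
  rw [integral_Icc_eq_integral_Ioc, ← intervalIntegral.integral_of_le hb,
    intervalIntegral.integral_eq_sub_of_hasDerivAt (fun t _ => hderiv t)
      (hcont.intervalIntegrable _ _),
    h₁ _ (by simp [Fin.sum_univ_succAbove _ i, b]), h₀ _ (by simp), sub_zero]

def lam0Poly : MvPolynomial (Fin 3) ℝ := 1 - X 0 - X 1 - X 2

theorem eval_lam0Poly (x : Fin 3 → ℝ) : eval x lam0Poly = lam 0 x := by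
  simp [lam0Poly, lam]

theorem lam0Poly_ne_zero : lam0Poly ≠ 0 := fun h => by
  simpa [h, lam] using eval_lam0Poly 0

theorem totalDegree_lam0Poly_le : lam0Poly.totalDegree ≤ 1 := by
  refine (totalDegree_sub _ _).trans (max_le ((totalDegree_sub _ _).trans (max_le
    ((totalDegree_sub _ _).trans (max_le ?_ ?_)) ?_)) ?_) <;> simp [totalDegree_X]

theorem integral_pderiv_X_mul_lam0Poly_mul (i : Fin 3) (k : MvPolynomial (Fin 3) ℝ) :
    ∫ x in Ktet, eval x (pderiv i (X i * lam0Poly * k)) = 0 := by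
  refine integral_pderiv_eq_zero_of_eval_eq_zero i (fun x hx => by simp [hx])
    fun x hx => ?_
  simp only [map_mul, eval_lam0Poly, lam, Matrix.cons_val_zero]
  rw [Fin.sum_univ_three] at hx
  rw [show 1 - x 0 - x 1 - x 2 = 0 by linarith, mul_zero, zero_mul]

theorem divP_add (Φ Ψ : Fin 3 → MvPolynomial (Fin 3) ℝ) : divP (Φ + Ψ) = divP Φ + divP Ψ := by
  simp [divP, Finset.sum_add_distrib]

theorem divP_smul (c : ℝ) (Φ : Fin 3 → MvPolynomial (Fin 3) ℝ) : divP (c • Φ) = c • divP Φ := by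
  simp [divP, Finset.smul_sum]

@[simp]
theorem divP_zero : divP 0 = 0 := by simp [divP]

/-- The `i`-th component of `n_j` vanishes unless `j = 0` or `j = i + 1`, and `xᵢ λ₀` vanishes
on those two faces. -/
theorem mul_lam_zero_mul_normalK_eq_zero {j : Fin 4} {q : Fin 3 → ℝ} (hq : q ∈ faceK j)
    (i : Fin 3) : q i * lam 0 q * normalK j i = 0 := by
  have hface : lam j q = 0 := hq.2
  fin_cases j
  · simp_all
  all_goals fin_cases i <;> simp_all [lam, normalK]

def bubble (i : Fin 3) (h : MvPolynomial (Fin 3) ℝ) : Fin 3 → MvPolynomial (Fin 3) ℝ :=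
  Pi.single i (X i * lam0Poly * h)

theorem divP_bubble (i : Fin 3) (h : MvPolynomial (Fin 3) ℝ) :
    divP (bubble i h) = pderiv i (X i * lam0Poly * h) := by
  rw [divP, Finset.sum_eq_single i (fun k _ hk => by simp [bubble, hk]) (by simp)]
  simp [bubble]

theorem normalVanish_bubble (i : Fin 3) (h : MvPolynomial (Fin 3) ℝ) :
    normalVanish (bubble i h) := by
  intro j q hq
  rw [Finset.sum_eq_single i (fun k _ hk => by simp [bubble, hk]) (by simp)]
  simp only [bubble, Pi.single_eq_same, map_mul, eval_X, eval_lam0Poly]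
  rw [mul_right_comm, mul_lam_zero_mul_normalK_eq_zero hq, zero_mul]

def spaceV (p : ℕ) : Submodule ℝ (Fin 3 → MvPolynomial (Fin 3) ℝ) where
  carrier := {Φ | (∀ i, (Φ i).totalDegree ≤ p) ∧ normalVanish Φ}
  add_mem' := by
    rintro Φ Ψ ⟨hΦ, hΦn⟩ ⟨hΨ, hΨn⟩
    refine ⟨fun i => (totalDegree_add _ _).trans (max_le (hΦ i) (hΨ i)), fun j q hq => ?_⟩
    simp only [Pi.add_apply, map_add, add_mul, Finset.sum_add_distrib, hΦn j q hq,
      hΨn j q hq, add_zero]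
  zero_mem' := ⟨fun i => by simp, fun j q hq => by simp⟩
  smul_mem' := by
    rintro c Φ ⟨hΦ, hΦn⟩
    refine ⟨fun i => (totalDegree_smul_le c (Φ i)).trans (hΦ i), fun j q hq => ?_⟩
    simp only [Pi.smul_apply, smul_eval, mul_assoc, ← Finset.mul_sum, hΦn j q hq, mul_zero]

def spaceQ (p : ℕ) : Submodule ℝ (MvPolynomial (Fin 3) ℝ) :=
  restrictTotalDegree (Fin 3) ℝ (p - 1) ⊓ LinearMap.ker integralK

theorem mem_spaceV {p : ℕ} {Φ : Fin 3 → MvPolynomial (Fin 3) ℝ} :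
    Φ ∈ spaceV p ↔ (∀ i, (Φ i).totalDegree ≤ p) ∧ normalVanish Φ := Iff.rfl

theorem mem_spaceQ {p : ℕ} {w : MvPolynomial (Fin 3) ℝ} :
    w ∈ spaceQ p ↔ w.totalDegree ≤ p - 1 ∧ ∫ x in Ktet, eval x w = 0 := by
  simp [spaceQ, mem_restrictTotalDegree, integralK_apply]

instance (p : ℕ) : FiniteDimensional ℝ ((spaceV p).prod (spaceQ p)) := by
  have hfg (N : ℕ) : (restrictTotalDegree (Fin 3) ℝ N).FG := Module.Finite.iff_fg.mp inferInstance
  have hV : spaceV p ≤ Submodule.pi Set.univ fun _ => restrictTotalDegree (Fin 3) ℝ p :=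
    fun Φ hΦ i _ => (mem_restrictTotalDegree _ _ _).mpr (hΦ.1 i)
  exact Module.Finite.iff_fg.mpr
    (((Submodule.fg_pi fun _ => hfg p).of_le hV).prod ((hfg _).of_le inf_le_left))

theorem bubble_mem_spaceV {p : ℕ} (i : Fin 3) {h : MvPolynomial (Fin 3) ℝ}
    (hh : h.totalDegree + 2 ≤ p) : bubble i h ∈ spaceV p := by
  refine ⟨fun k => ?_, normalVanish_bubble i h⟩
  rcases eq_or_ne k i with rfl | hk
  · have hX : (X k * lam0Poly).totalDegree ≤ 2 :=
      (totalDegree_mul _ _).trans (by rw [totalDegree_X]; linarith [totalDegree_lam0Poly_le])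
    simp only [bubble, Pi.single_eq_same]
    exact (totalDegree_mul _ _).trans (by omega)
  · simp [bubble, hk]

theorem pderiv_eq_zero_of_forall_integralK_mul_divP_eq_zero {p : ℕ}
    {v : MvPolynomial (Fin 3) ℝ} (hv : v.totalDegree ≤ p - 1)
    (h : ∀ Ψ ∈ spaceV p, integralK (v * divP Ψ) = 0) (i : Fin 3) : pderiv i v = 0 := by
  by_contra hne
  have hdeg : (pderiv i v).totalDegree + 2 ≤ p := by
    have := totalDegree_pderiv_le i v
    have : v.totalDegree ≠ 0 := fun h0 => hne (pderiv_eq_zero_of_totalDegree_eq_zero h0 i)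
    omega
  have htest := h _ (bubble_mem_spaceV i hdeg)
  rw [divP_bubble] at htest
  have hparts := integral_pderiv_X_mul_lam0Poly_mul i (pderiv i v * v)
  have hleibniz : pderiv i (X i * lam0Poly * (pderiv i v * v)) =
      v * pderiv i (X i * lam0Poly * pderiv i v) +
        X i * lam0Poly * (pderiv i v * pderiv i v) := by
    rw [← mul_assoc, pderiv_mul]
    ring
  rw [← integralK_apply, hleibniz, map_add, htest, zero_add] at hparts
  have hnn (x : Fin 3 → ℝ) (hx : x ∈ Ktet) :
      0 ≤ eval x (X i * lam0Poly * (pderiv i v * pderiv i v)) := by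
    simp only [map_mul, eval_X, eval_lam0Poly]
    exact mul_nonneg (mul_nonneg ((mem_Ktet_iff.mp hx).1 i) (hx 0)) (mul_self_nonneg _)
  simpa [X_ne_zero, lam0Poly_ne_zero, hne] using eq_zero_of_nonneg_on_Ktet hnn hparts

theorem eq_zero_of_forall_integralK_mul_divP_eq_zero {p : ℕ} {v : MvPolynomial (Fin 3) ℝ}
    (hv : v ∈ spaceQ p) (h : ∀ Ψ ∈ spaceV p, integralK (v * divP Ψ) = 0) : v = 0 := by
  obtain ⟨hdeg, hmean⟩ := hv
  have hC := eq_C_of_forall_pderiv_eq_zero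
    (pderiv_eq_zero_of_forall_integralK_mul_divP_eq_zero
      ((mem_restrictTotalDegree _ _ _).mp hdeg) h)
  have hsq : integralK (v * v) = 0 := calc
    integralK (v * v) = coeff 0 v * integralK v := by
      nth_rw 1 [hC]
      rw [C_mul', map_smul, smul_eq_mul]
    _ = 0 := by rw [LinearMap.mem_ker.mp hmean, mul_zero]
  exact mul_self_eq_zero.mp (eq_zero_of_nonneg_on_Ktet (fun x _ => by
    rw [map_mul]; exact mul_self_nonneg _) hsq)

def mixedForm : ((Fin 3 → MvPolynomial (Fin 3) ℝ) × MvPolynomial (Fin 3) ℝ) →ₗ[ℝ]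
    ((Fin 3 → MvPolynomial (Fin 3) ℝ) × MvPolynomial (Fin 3) ℝ) →ₗ[ℝ] ℝ :=
  LinearMap.mk₂ ℝ (fun x z => integralK (x.1 ⬝ᵥ z.1 + x.2 * divP z.1 + z.2 * divP x.1))
    (fun x y z => by
      simp only [Prod.fst_add, Prod.snd_add, add_dotProduct, divP_add, map_add, add_mul, mul_add]
      ring)
    (fun c x z => by
      simp only [Prod.smul_fst, Prod.smul_snd, smul_dotProduct, divP_smul, map_add, map_smul,
        smul_mul_assoc, mul_smul_comm, smul_eq_mul]
      ring)
    (fun x y z => by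
      simp only [Prod.fst_add, Prod.snd_add, dotProduct_add, divP_add, map_add, add_mul, mul_add]
      ring)
    (fun c x z => by
      simp only [Prod.smul_fst, Prod.smul_snd, dotProduct_smul, divP_smul, map_add, map_smul,
        smul_mul_assoc, mul_smul_comm, smul_eq_mul]
      ring)

theorem mixedForm_apply (x z : (Fin 3 → MvPolynomial (Fin 3) ℝ) × MvPolynomial (Fin 3) ℝ) :
    mixedForm x z = integralK (x.1 ⬝ᵥ z.1) + integralK (x.2 * divP z.1) +
      integralK (z.2 * divP x.1) := by
  simp [mixedForm]

def loadFunctional (B : Fin 3 → MvPolynomial (Fin 3) ℝ) :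
    ((Fin 3 → MvPolynomial (Fin 3) ℝ) × MvPolynomial (Fin 3) ℝ) →ₗ[ℝ] ℝ :=
  -(integralK ∘ₗ LinearMap.mulRight ℝ (divP B) ∘ₗ LinearMap.snd ℝ _ _)

theorem loadFunctional_apply (B : Fin 3 → MvPolynomial (Fin 3) ℝ)
    (z : (Fin 3 → MvPolynomial (Fin 3) ℝ) × MvPolynomial (Fin 3) ℝ) :
    loadFunctional B z = -integralK (z.2 * divP B) := rfl

theorem mixedForm_separating (p : ℕ) : ∀ x ∈ (spaceV p).prod (spaceQ p),
    (∀ z ∈ (spaceV p).prod (spaceQ p), mixedForm x z = 0) → x = 0 := by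
  rintro ⟨Φ, v⟩ ⟨hΦ, hv⟩ hx
  have hdiv : integralK (v * divP Φ) = 0 := by
    simpa [mixedForm_apply] using hx (0, v) ⟨zero_mem _, hv⟩
  have hΦ0 : Φ = 0 := eq_zero_of_integralK_dotProduct_self_eq_zero (by
    simpa [mixedForm_apply, hdiv] using hx (Φ, v) ⟨hΦ, hv⟩)
  have hv0 : v = 0 := eq_zero_of_forall_integralK_mul_divP_eq_zero hv fun Ψ hΨ => by
    simpa [mixedForm_apply, hΦ0] using hx (Ψ, 0) ⟨hΨ, zero_mem _⟩
  rw [hΦ0, hv0, Prod.mk_zero_zero]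

theorem forall_mixedForm_eq_loadFunctional_iff {p : ℕ} (B : Fin 3 → MvPolynomial (Fin 3) ℝ)
    (x : (Fin 3 → MvPolynomial (Fin 3) ℝ) × MvPolynomial (Fin 3) ℝ) :
    (∀ z ∈ (spaceV p).prod (spaceQ p), mixedForm x z = loadFunctional B z) ↔
      (∀ w ∈ spaceQ p, integralK (w * divP x.1) + integralK (w * divP B) = 0) ∧
      ∀ Ψ ∈ spaceV p, integralK (x.1 ⬝ᵥ Ψ) + integralK (x.2 * divP Ψ) = 0 := by
  simp only [mixedForm_apply, loadFunctional_apply]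
  refine ⟨fun h => ⟨fun w hw => ?_, fun Ψ hΨ => ?_⟩, fun ⟨hQ, hV⟩ z hz => ?_⟩
  · simpa [← eq_neg_iff_add_eq_zero] using h (0, w) ⟨zero_mem _, hw⟩
  · simpa using h (Ψ, 0) ⟨hΨ, zero_mem _⟩
  · linear_combination hV z.1 hz.1 + hQ z.2 hz.2

theorem mixed_system_unique_solution_general (p : ℕ)
    (B : Fin 3 → MvPolynomial (Fin 3) ℝ) :
    ∃! Φv : (Fin 3 → MvPolynomial (Fin 3) ℝ) × MvPolynomial (Fin 3) ℝ,
      (∀ i, (Φv.1 i).totalDegree ≤ p) ∧ normalVanish Φv.1 ∧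
      Φv.2.totalDegree ≤ p - 1 ∧ (∫ x in Ktet, MvPolynomial.eval x Φv.2) = 0 ∧
      (∀ w : MvPolynomial (Fin 3) ℝ, w.totalDegree ≤ p - 1 →
        (∫ x in Ktet, MvPolynomial.eval x w) = 0 →
        (∫ x in Ktet, MvPolynomial.eval x w * MvPolynomial.eval x (divP Φv.1))
          + ∫ x in Ktet, MvPolynomial.eval x w * MvPolynomial.eval x (divP B) = 0) ∧
      (∀ Ψ : Fin 3 → MvPolynomial (Fin 3) ℝ, (∀ i, (Ψ i).totalDegree ≤ p) →
        normalVanish Ψ →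
        (∫ x in Ktet, ∑ i, MvPolynomial.eval x (Φv.1 i) * MvPolynomial.eval x (Ψ i))
          + ∫ x in Ktet, MvPolynomial.eval x Φv.2 * MvPolynomial.eval x (divP Ψ) = 0) := by
  refine (existsUnique_congr fun Φv => ?_).mp (LinearMap.existsUnique_mem_forall_apply_eq
    mixedForm _ (mixedForm_separating p) (loadFunctional B))
  rw [Submodule.mem_prod, forall_mixedForm_eq_loadFunctional_iff]
  simp only [mem_spaceV, mem_spaceQ, integralK_mul, integralK_dotProduct, and_imp, and_assoc]

/-- unique solvability of the local mixed system: for every B ∈ (P_p)³ there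
is a unique (Φ, v) ∈ V × Q with ∫ w div Φ + ∫ w div B = 0 ∀ w ∈ Q and
∫ Φ·Ψ + ∫ v div Ψ = 0 ∀ Ψ ∈ V. -/
theorem mixed_system_unique_solution (p : ℕ) (hp : 1 ≤ p)
    (B : Fin 3 → MvPolynomial (Fin 3) ℝ) (hB : ∀ i, (B i).totalDegree ≤ p) :
    ∃! Φv : (Fin 3 → MvPolynomial (Fin 3) ℝ) × MvPolynomial (Fin 3) ℝ,
      (∀ i, (Φv.1 i).totalDegree ≤ p) ∧ normalVanish Φv.1 ∧
      Φv.2.totalDegree ≤ p - 1 ∧ (∫ x in Ktet, MvPolynomial.eval x Φv.2) = 0 ∧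
      (∀ w : MvPolynomial (Fin 3) ℝ, w.totalDegree ≤ p - 1 →
        (∫ x in Ktet, MvPolynomial.eval x w) = 0 →
        (∫ x in Ktet, MvPolynomial.eval x w * MvPolynomial.eval x (divP Φv.1))
          + ∫ x in Ktet, MvPolynomial.eval x w * MvPolynomial.eval x (divP B) = 0) ∧
      (∀ Ψ : Fin 3 → MvPolynomial (Fin 3) ℝ, (∀ i, (Ψ i).totalDegree ≤ p) →
        normalVanish Ψ →
        (∫ x in Ktet, ∑ i, MvPolynomial.eval x (Φv.1 i) * MvPolynomial.eval x (Ψ i))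
          + ∫ x in Ktet, MvPolynomial.eval x Φv.2 * MvPolynomial.eval x (divP Ψ) = 0) :=
  mixed_system_unique_solution_general p B
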